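/- Let W be the unique discrete gradient, i.e. the vector with W·w₁ = f₂−f₁ and W·(v₃−v₁) = f₃−f₁. Then W' := K·W is the unique vector in ℝ² satisfying the DEC anisotropic flux system W'·w₁ = λ₁(f₃−f₂) + μ₁(f₁−f₃), W'·w₂ = λ₂(f₁−f₃) + μ₂(f₂−f₁), W'·w₃ = λ₃(f₂−f₁) + μ₃(f₃−f₂); i.e., the discrete anisotropic flux is the image under K of the discrete isotropic flux. -/

import Mathlib

/-!
For symmetric `K` we have `(K W) · w = W · (K w)`. Expanding `K wᵢ` in the other two edges and
using that `W` pairs with every edge to the difference of the values of `f` at its endpoints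
gives the three flux equations for `K W`. Uniqueness holds because a vector is determined by
its pairings with two edges of a nondegenerate triangle.
-/

noncomputable section

open Matrix

def dot2 (a b : Fin 2 → ℝ) : ℝ := a 0 * b 0 + a 1 * b 1

def det2 (a b : Fin 2 → ℝ) : ℝ := a 0 * b 1 - a 1 * b 0

theorem dot2_eq_dotProduct (a b : Fin 2 → ℝ) : dot2 a b = a ⬝ᵥ b := by
  simp [dot2, dotProduct, Fin.sum_univ_two]

theorem dot2_add_right (a b c : Fin 2 → ℝ) : dot2 a (b + c) = dot2 a b + dot2 a c := by
  simp only [dot2_eq_dotProduct, dotProduct_add]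

theorem dot2_neg_right (a b : Fin 2 → ℝ) : dot2 a (-b) = -dot2 a b := by
  simp only [dot2_eq_dotProduct, dotProduct_neg]

theorem dot2_mulVec_of_isSymm {K : Matrix (Fin 2) (Fin 2) ℝ} (hK : K.IsSymm) (a b : Fin 2 → ℝ) :
    dot2 (K *ᵥ a) b = dot2 a (K *ᵥ b) := by
  rw [dot2_eq_dotProduct, dot2_eq_dotProduct, dotProduct_comm, dotProduct_mulVec,
    ← mulVec_transpose, hK.eq, dotProduct_comm]

theorem dot2_mulVec_eq_of_mulVec_eq {K : Matrix (Fin 2) (Fin 2) ℝ} (hK : K.IsSymm)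
    {w u u' : Fin 2 → ℝ} {l m : ℝ} (h : K *ᵥ w = l • u + m • u') (a : Fin 2 → ℝ) :
    dot2 (K *ᵥ a) w = l * dot2 a u + m * dot2 a u' := by
  rw [dot2_mulVec_of_isSymm hK, h]
  simp only [dot2_eq_dotProduct, dotProduct_add, dotProduct_smul, smul_eq_mul]

theorem eq_of_dot2_eq_of_det2_ne_zero {a b x y : Fin 2 → ℝ} (hab : det2 a b ≠ 0)
    (ha : dot2 x a = dot2 y a) (hb : dot2 x b = dot2 y b) : x = y := by
  unfold dot2 at ha hb
  unfold det2 at hab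
  funext i
  fin_cases i
  · have h : (x 0 - y 0) * (a 0 * b 1 - a 1 * b 0) = 0 := by
      linear_combination b 1 * ha - a 1 * hb
    simpa [sub_eq_zero] using (mul_eq_zero.mp h).resolve_right hab
  · have h : (x 1 - y 1) * (a 0 * b 1 - a 1 * b 0) = 0 := by
      linear_combination a 0 * hb - b 0 * ha
    simpa [sub_eq_zero] using (mul_eq_zero.mp h).resolve_right hab

/-- If `W` is the DEC discrete gradient, then `W' := K·W` is the unique vector
satisfying the DEC anisotropic flux system: the discrete anisotropic flux is the
image under `K` of the discrete isotropic flux. -/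
theorem dec_anisotropic_flux_is_K_of_isotropic_flux
    (v₁ v₂ v₃ : Fin 2 → ℝ)
    (w₁ w₂ w₃ : Fin 2 → ℝ)
    (hw₁ : w₁ = v₂ - v₁) (hw₂ : w₂ = v₃ - v₂) (hw₃ : w₃ = v₁ - v₃)
    (hA : det2 (v₂ - v₁) (v₃ - v₁) ≠ 0)
    (K : Matrix (Fin 2) (Fin 2) ℝ) (hK : K.IsSymm)
    (l₁ m₁ l₂ m₂ l₃ m₃ : ℝ)
    (h₁ : K.mulVec w₁ = l₁ • w₂ + m₁ • w₃)
    (h₂ : K.mulVec w₂ = l₂ • w₃ + m₂ • w₁)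
    (h₃ : K.mulVec w₃ = l₃ • w₁ + m₃ • w₂)
    (f₁ f₂ f₃ : ℝ) (W : Fin 2 → ℝ)
    (hW₁ : dot2 W w₁ = f₂ - f₁) (hW₂ : dot2 W (v₃ - v₁) = f₃ - f₁) :
    (dot2 (K.mulVec W) w₁ = l₁ * (f₃ - f₂) + m₁ * (f₁ - f₃) ∧
     dot2 (K.mulVec W) w₂ = l₂ * (f₁ - f₃) + m₂ * (f₂ - f₁) ∧
     dot2 (K.mulVec W) w₃ = l₃ * (f₂ - f₁) + m₃ * (f₃ - f₂)) ∧
    ∀ W' : Fin 2 → ℝ,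
      dot2 W' w₁ = l₁ * (f₃ - f₂) + m₁ * (f₁ - f₃) →
      dot2 W' w₂ = l₂ * (f₁ - f₃) + m₂ * (f₂ - f₁) →
      dot2 W' w₃ = l₃ * (f₂ - f₁) + m₃ * (f₃ - f₂) →
      W' = K.mulVec W := by
  have hv₃ : v₃ - v₁ = w₁ + w₂ := by rw [hw₁, hw₂]; abel
  have hWw₂ : dot2 W w₂ = f₃ - f₂ := by
    rw [hv₃, dot2_add_right, hW₁] at hW₂
    linear_combination hW₂
  have hWw₃ : dot2 W w₃ = f₁ - f₃ := by
    rw [hw₃, ← neg_sub, dot2_neg_right, hW₂, neg_sub]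
  have flux₁ := dot2_mulVec_eq_of_mulVec_eq hK h₁ W
  have flux₂ := dot2_mulVec_eq_of_mulVec_eq hK h₂ W
  have flux₃ := dot2_mulVec_eq_of_mulVec_eq hK h₃ W
  simp only [hW₁, hWw₂, hWw₃] at flux₁ flux₂ flux₃
  refine ⟨⟨flux₁, flux₂, flux₃⟩, fun W' g₁ g₂ _ => ?_⟩
  refine eq_of_dot2_eq_of_det2_ne_zero (hw₁ ▸ hA) (g₁.trans flux₁.symm) ?_
  rw [hv₃, dot2_add_right, dot2_add_right, g₁, g₂, flux₁, flux₂]
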